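/- arXiv:2005.14224 — 4 statements merged into one kernel-verified Lean document; each statement's English description precedes it below -/
import Mathlib

section
/- Constructive Implicit Function Theorem (existence and local uniqueness): Assume (H1)–(H4) together with 4K²ρL₁ < 1 and 2Kρ < ℓ_x. Then there exists a pair of constants (δ_α, δ_x) with 0 ≤ δ_α ≤ ℓ_α and 0 < δ_x ≤ ℓ_x satisfying 2KL₁δ_x + 2KL₂δ_α ≤ 1 and 2Kρ + 2KL₃δ_α + 2KL₄δ_α² ≤ δ_x; and for every pair (δ_α, δ_x) satisfying these four conditions the following holds: for every α ∈ P with ‖α − α*‖_P ≤ δ_α there exists a uniquely determined element x(α) ∈ X with ‖x(α) − x*‖_X ≤ δ_x such that G(α, x(α)) = 0. In particular, all solutions of G(α,x) = 0 with ‖α − α*‖_P ≤ δ_α and ‖x − x*‖_X ≤ δ_x lie on the graph of α ↦ x(α). -/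
/-!
The zeros of `x ↦ G (α, x)` are the fixed points of the simplified Newton map
`x ↦ x - A⁻¹ G (α, x)` with `A = D_xG(α*, x*)`. On the ball of radius `δx` about `x*` its
derivative `A⁻¹ (A - D_xG(α, x))` has norm at most `K (L₁ δx + L₂ δα) ≤ 1/2` by (H3), and by (H1),
(H4) and the mean value theorem it moves `x*` by at most `K (ρ + L₃ δα + L₄ δα²) ≤ δx / 2`. So it is
a `1/2`-contraction of that closed ball into itself, and Banach's fixed point theorem gives exactly
one zero there. The constants `δα = 0`, `δx = 2Kρ` are admissible since `4K²ρL₁ < 1`.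
-/

open Set Metric Function
open scoped NNReal

theorem existsUnique_isFixedPt_of_lipschitzOnWith {α : Type*} [MetricSpace α] {f : α → α}
    {s : Set α} {q : ℝ≥0} (hq : q < 1) (hsc : IsComplete s) (hs : s.Nonempty)
    (hsf : MapsTo f s s) (hf : LipschitzOnWith q f s) :
    ∃! x, x ∈ s ∧ IsFixedPt f x := by
  obtain ⟨x₀, hx₀⟩ := hs
  obtain ⟨x, hxs, hfx, -⟩ := ContractingWith.exists_fixedPoint' hsc hsf
    ⟨hq, hf.mapsToRestrict hsf⟩ hx₀ (edist_ne_top _ _)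
  refine ⟨x, ⟨hxs, hfx⟩, fun y ⟨hys, hfy⟩ => ?_⟩
  have hdist : dist y x ≤ q * dist y x := by
    simpa only [hfy.eq, hfx.eq] using hf.dist_le_mul y hys x hxs
  have hq' : (q : ℝ) < 1 := hq
  exact dist_le_zero.mp (by nlinarith [dist_nonneg (x := y) (y := x)])

theorem norm_image_sub_le_of_norm_hasFDerivAt_le_on_closedBall
    {E F : Type*} [NormedAddCommGroup E] [NormedSpace ℝ E] [NormedAddCommGroup F]
    [NormedSpace ℝ F] {g : E → F} {g' : E → E →L[ℝ] F} {a b : E} {r C : ℝ}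
    (hg : ∀ x ∈ closedBall a r, HasFDerivAt g (g' x) x)
    (hbound : ∀ x ∈ closedBall a r, ‖g' x‖ ≤ C) (hb : b ∈ closedBall a r) :
    ‖g b - g a‖ ≤ C * r := by
  have ha : a ∈ closedBall a r := mem_closedBall_self (dist_nonneg.trans hb)
  have hC : 0 ≤ C := (norm_nonneg _).trans (hbound a ha)
  calc ‖g b - g a‖ ≤ C * ‖b - a‖ :=
        (convex_closedBall a r).norm_image_sub_le_of_norm_hasFDerivWithin_le
          (fun x hx => (hg x hx).hasFDerivWithinAt) hbound ha hb
    _ ≤ C * r := mul_le_mul_of_nonneg_left (mem_closedBall_iff_norm.mp hb) hC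

section SimplifiedNewton

variable {X Y : Type*} [NormedAddCommGroup X] [NormedSpace ℝ X]
  [NormedAddCommGroup Y] [NormedSpace ℝ Y]

def simplifiedNewtonMap (A : X ≃L[ℝ] Y) (f : X → Y) (x : X) : X :=
  x - A.symm (f x)

theorem isFixedPt_simplifiedNewtonMap_iff {A : X ≃L[ℝ] Y} {f : X → Y} {x : X} :
    IsFixedPt (simplifiedNewtonMap A f) x ↔ f x = 0 := by
  simp [IsFixedPt, simplifiedNewtonMap]

theorem HasFDerivAt.simplifiedNewtonMap {A : X ≃L[ℝ] Y} {f : X → Y} {f' : X →L[ℝ] Y} {x : X}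
    (hf : HasFDerivAt f f' x) :
    HasFDerivAt (simplifiedNewtonMap A f) ((A.symm : Y →L[ℝ] X).comp ((A : X →L[ℝ] Y) - f')) x := by
  have hderiv : (A.symm : Y →L[ℝ] X).comp ((A : X →L[ℝ] Y) - f') =
      ContinuousLinearMap.id ℝ X - (A.symm : Y →L[ℝ] X).comp f' := by
    ext v
    simp
  rw [hderiv]
  exact (hasFDerivAt_id x).sub ((A.symm : Y →L[ℝ] X).hasFDerivAt.comp x hf)

theorem existsUnique_zero_of_simplifiedNewton [CompleteSpace X] {f : X → Y}
    {f' : X → X →L[ℝ] Y} (A : X ≃L[ℝ] Y) {x₀ : X} {r : ℝ} {q : ℝ≥0} (hq : q < 1)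
    (hf : ∀ x ∈ closedBall x₀ r, HasFDerivAt f (f' x) x)
    (hf' : ∀ x ∈ closedBall x₀ r, ‖(A.symm : Y →L[ℝ] X).comp ((A : X →L[ℝ] Y) - f' x)‖ ≤ q)
    (hfx₀ : ‖A.symm (f x₀)‖ ≤ (1 - q) * r) :
    ∃! x, x ∈ closedBall x₀ r ∧ f x = 0 := by
  have hr : 0 ≤ r := by
    have hq' : (q : ℝ) < 1 := hq
    nlinarith [norm_nonneg (A.symm (f x₀))]
  have hx₀ : x₀ ∈ closedBall x₀ r := mem_closedBall_self hr
  have hT : LipschitzOnWith q (simplifiedNewtonMap A f) (closedBall x₀ r) :=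
    (convex_closedBall x₀ r).lipschitzOnWith_of_nnnorm_hasFDerivWithin_le
      (fun x hx => (hf x hx).simplifiedNewtonMap.hasFDerivWithinAt) hf'
  have hmaps : MapsTo (simplifiedNewtonMap A f) (closedBall x₀ r) (closedBall x₀ r) := by
    intro x hx
    rw [mem_closedBall] at hx ⊢
    set T := simplifiedNewtonMap A f
    have hTx₀ : dist (T x₀) x₀ ≤ (1 - q) * r := by
      simpa [T, simplifiedNewtonMap, dist_eq_norm] using hfx₀
    calc dist (T x) x₀ ≤ dist (T x) (T x₀) + dist (T x₀) x₀ := dist_triangle _ _ _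
      _ ≤ q * r + (1 - q) * r := by
          gcongr
          exact (hT.dist_le_mul x hx x₀ hx₀).trans (by gcongr)
      _ = r := by ring
  simpa only [isFixedPt_simplifiedNewtonMap_iff] using
    existsUnique_isFixedPt_of_lipschitzOnWith hq isClosed_closedBall.isComplete ⟨x₀, hx₀⟩ hmaps hT

end SimplifiedNewton

theorem constructive_implicit_function_theorem_existence_general
    {P X Y : Type*}
    [NormedAddCommGroup P] [NormedSpace ℝ P]
    [NormedAddCommGroup X] [NormedSpace ℝ X] [CompleteSpace X]
    [NormedAddCommGroup Y] [NormedSpace ℝ Y]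
    (G : P × X → Y) (DG : P × X → (P × X) →L[ℝ] Y)
    (hG : ∀ p : P × X, HasFDerivAt G (DG p) p)
    (αs : P) (xs : X)
    (ρ K L₁ L₂ L₃ L₄ ℓx ℓα : ℝ)
    (hρ : 0 < ρ) (hK : 0 < K) (hL₁ : 0 < L₁) (hL₂ : 0 < L₂)
    (hL₄ : 0 < L₄) (hℓα : 0 ≤ ℓα)
    -- (H1) small residual
    (H1 : ‖G (αs, xs)‖ ≤ ρ)
    -- (H2) invertibility of the partial Fréchet derivative with inverse bound K
    (E : X ≃L[ℝ] Y)
    (hE : (E : X →L[ℝ] Y) = (DG (αs, xs)).comp (ContinuousLinearMap.inr ℝ P X))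
    (H2 : ‖(E.symm : Y →L[ℝ] X)‖ ≤ K)
    -- (H3) local Lipschitz continuity of the partial derivative in x
    (H3 : ∀ (α : P) (x : X), ‖x - xs‖ ≤ ℓx → ‖α - αs‖ ≤ ℓα →
      ‖(DG (α, x)).comp (ContinuousLinearMap.inr ℝ P X) -
        (DG (αs, xs)).comp (ContinuousLinearMap.inr ℝ P X)‖ ≤
        L₁ * ‖x - xs‖ + L₂ * ‖α - αs‖)
    -- (H4) bound on the partial derivative in the parameter
    (H4 : ∀ α : P, ‖α - αs‖ ≤ ℓα →
      ‖(DG (α, xs)).comp (ContinuousLinearMap.inl ℝ P X)‖ ≤ L₃ + L₄ * ‖α - αs‖)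
    (hc1 : 4 * K ^ 2 * ρ * L₁ < 1) (hc2 : 2 * K * ρ < ℓx) :
    (∃ δα δx : ℝ, 0 ≤ δα ∧ δα ≤ ℓα ∧ 0 < δx ∧ δx ≤ ℓx ∧
      2 * K * L₁ * δx + 2 * K * L₂ * δα ≤ 1 ∧
      2 * K * ρ + 2 * K * L₃ * δα + 2 * K * L₄ * δα ^ 2 ≤ δx) ∧
    (∀ δα δx : ℝ, 0 ≤ δα → δα ≤ ℓα → 0 < δx → δx ≤ ℓx →
      2 * K * L₁ * δx + 2 * K * L₂ * δα ≤ 1 →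
      2 * K * ρ + 2 * K * L₃ * δα + 2 * K * L₄ * δα ^ 2 ≤ δx →
      ∀ α : P, ‖α - αs‖ ≤ δα →
        ∃! x : X, ‖x - xs‖ ≤ δx ∧ G (α, x) = 0) := by
  refine ⟨⟨0, 2 * K * ρ, le_rfl, hℓα, by positivity, hc2.le, by nlinarith, by nlinarith⟩, ?_⟩
  intro δα δx _ hδαℓ _ hδxℓ hcontr hself α hα
  have hparam : ‖G (α, xs) - G (αs, xs)‖ ≤ (L₃ + L₄ * δα) * δα := by
    refine norm_image_sub_le_of_norm_hasFDerivAt_le_on_closedBall (g := fun β => G (β, xs))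
      (fun β _ => (hG (β, xs)).comp β (hasFDerivAt_prodMk_left β xs)) (fun β hβ => ?_)
      (mem_closedBall_iff_norm.mpr hα)
    have hβ := mem_closedBall_iff_norm.mp hβ
    have := H4 β (hβ.trans hδαℓ)
    nlinarith
  have hderiv : ∀ x ∈ closedBall xs δx, ‖(E.symm : Y →L[ℝ] X).comp
      ((E : X →L[ℝ] Y) - (DG (α, x)).comp (ContinuousLinearMap.inr ℝ P X))‖ ≤ (1 / 2 : ℝ≥0) := by
    intro x hx
    have hx := mem_closedBall_iff_norm.mp hx
    have h3 := H3 α x (hx.trans hδxℓ) (hα.trans hδαℓ)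
    rw [← hE, norm_sub_rev] at h3
    calc _ ≤ K * (L₁ * ‖x - xs‖ + L₂ * ‖α - αs‖) :=
          (ContinuousLinearMap.opNorm_comp_le _ _).trans (mul_le_mul H2 h3 (norm_nonneg _) hK.le)
      _ ≤ K * (L₁ * δx + L₂ * δα) := by gcongr
      _ ≤ (1 / 2 : ℝ≥0) := by push_cast; linarith
  have hnewton : ‖E.symm (G (α, xs))‖ ≤ (1 - (1 / 2 : ℝ≥0)) * δx := by
    calc ‖E.symm (G (α, xs))‖ ≤ K * (ρ + (L₃ + L₄ * δα) * δα) := by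
          refine ((E.symm : Y →L[ℝ] X).le_opNorm _).trans (mul_le_mul H2 ?_ (norm_nonneg _) hK.le)
          linarith [norm_le_norm_add_norm_sub' (G (α, xs)) (G (αs, xs))]
      _ ≤ (1 - (1 / 2 : ℝ≥0)) * δx := by push_cast; nlinarith
  simpa only [mem_closedBall_iff_norm, comp_apply] using existsUnique_zero_of_simplifiedNewton E
    (by norm_num) (fun x _ => (hG (α, x)).comp x (hasFDerivAt_prodMk_right α x)) hderiv hnewton

/-- Constructive Implicit Function Theorem (existence and local uniqueness). -/
theorem constructive_implicit_function_theorem_existence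
    {P X Y : Type*}
    [NormedAddCommGroup P] [NormedSpace ℝ P] [CompleteSpace P]
    [NormedAddCommGroup X] [NormedSpace ℝ X] [CompleteSpace X]
    [NormedAddCommGroup Y] [NormedSpace ℝ Y] [CompleteSpace Y]
    (G : P × X → Y) (DG : P × X → (P × X) →L[ℝ] Y)
    (hG : ∀ p : P × X, HasFDerivAt G (DG p) p)
    (αs : P) (xs : X)
    (ρ K L₁ L₂ L₃ L₄ ℓx ℓα : ℝ)
    (hρ : 0 < ρ) (hK : 0 < K) (hL₁ : 0 < L₁) (hL₂ : 0 < L₂)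
    (hL₃ : 0 < L₃) (hL₄ : 0 < L₄) (hℓx : 0 < ℓx) (hℓα : 0 ≤ ℓα)
    -- (H1) small residual
    (H1 : ‖G (αs, xs)‖ ≤ ρ)
    -- (H2) invertibility of the partial Fréchet derivative with inverse bound K
    (E : X ≃L[ℝ] Y)
    (hE : (E : X →L[ℝ] Y) = (DG (αs, xs)).comp (ContinuousLinearMap.inr ℝ P X))
    (H2 : ‖(E.symm : Y →L[ℝ] X)‖ ≤ K)
    -- (H3) local Lipschitz continuity of the partial derivative in x
    (H3 : ∀ (α : P) (x : X), ‖x - xs‖ ≤ ℓx → ‖α - αs‖ ≤ ℓα →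
      ‖(DG (α, x)).comp (ContinuousLinearMap.inr ℝ P X) -
        (DG (αs, xs)).comp (ContinuousLinearMap.inr ℝ P X)‖ ≤
        L₁ * ‖x - xs‖ + L₂ * ‖α - αs‖)
    -- (H4) bound on the partial derivative in the parameter
    (H4 : ∀ α : P, ‖α - αs‖ ≤ ℓα →
      ‖(DG (α, xs)).comp (ContinuousLinearMap.inl ℝ P X)‖ ≤ L₃ + L₄ * ‖α - αs‖)
    (hc1 : 4 * K ^ 2 * ρ * L₁ < 1) (hc2 : 2 * K * ρ < ℓx) :
    (∃ δα δx : ℝ, 0 ≤ δα ∧ δα ≤ ℓα ∧ 0 < δx ∧ δx ≤ ℓx ∧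
      2 * K * L₁ * δx + 2 * K * L₂ * δα ≤ 1 ∧
      2 * K * ρ + 2 * K * L₃ * δα + 2 * K * L₄ * δα ^ 2 ≤ δx) ∧
    (∀ δα δx : ℝ, 0 ≤ δα → δα ≤ ℓα → 0 < δx → δx ≤ ℓx →
      2 * K * L₁ * δx + 2 * K * L₂ * δα ≤ 1 →
      2 * K * ρ + 2 * K * L₃ * δα + 2 * K * L₄ * δα ^ 2 ≤ δx →
      ∀ α : P, ‖α - αs‖ ≤ δα →
        ∃! x : X, ‖x - xs‖ ≤ δx ∧ G (α, x) = 0) :=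
  constructive_implicit_function_theorem_existence_general G DG hG αs xs ρ K L₁ L₂ L₃ L₄ ℓx ℓα hρ hK
    hL₁ hL₂ hL₄ hℓα H1 E hE H2 H3 H4 hc1 hc2
end

section
/- Constructive Implicit Function Theorem (invertibility of the linearization on the validation box): Assume (H1)–(H4), and let (δ_α, δ_x) be any pair with 0 ≤ δ_α ≤ ℓ_α and 0 < δ_x ≤ ℓ_x satisfying 2KL₁δ_x + 2KL₂δ_α ≤ 1 and 2Kρ + 2KL₃δ_α + 2KL₄δ_α² ≤ δ_x. Then for all pairs (α, x) ∈ P × X with ‖α − α*‖_P ≤ δ_α and ‖x − x*‖_X ≤ δ_x, the Fréchet derivative D_xG(α, x) ∈ L(X,Y) is a bounded invertible linear operator whose inverse belongs to L(Y,X). -/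
/-!
Write `A = D_xG(α, x)` and `E = D_xG(α*, x*)`. On the validation box, (H2) and (H3) give
`‖E⁻¹‖ ‖A - E‖ ≤ K (L₁ δ_x + L₂ δ_α) ≤ 1/2`, so `E⁻¹ A = 1 - E⁻¹ (E - A)` is invertible by a
Neumann series, and hence so is `A = E (E⁻¹ A)`.
-/

namespace ContinuousLinearEquiv

variable {𝕜 E F : Type*} [NontriviallyNormedField 𝕜]
  [NormedAddCommGroup E] [NormedSpace 𝕜 E] [CompleteSpace E]
  [NormedAddCommGroup F] [NormedSpace 𝕜 F]

theorem exists_eq_of_norm_symm_mul_norm_sub_lt_one (e : E ≃L[𝕜] F) (f : E →L[𝕜] F)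
    (h : ‖(e.symm : F →L[𝕜] E)‖ * ‖f - e‖ < 1) :
    ∃ e' : E ≃L[𝕜] F, (e' : E →L[𝕜] F) = f := by
  set t : E →L[𝕜] E := (e.symm : F →L[𝕜] E).comp ((e : E →L[𝕜] F) - f)
  have ht : ‖t‖ < 1 :=
    calc ‖t‖ ≤ ‖(e.symm : F →L[𝕜] E)‖ * ‖(e : E →L[𝕜] F) - f‖ :=
          ContinuousLinearMap.opNorm_comp_le _ _
      _ = ‖(e.symm : F →L[𝕜] E)‖ * ‖f - e‖ := by rw [norm_sub_rev]
      _ < 1 := h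
  have hw : ((Units.oneSub t ht : (E →L[𝕜] E)ˣ) : E →L[𝕜] E) = (e.symm : F →L[𝕜] E).comp f := by
    ext v
    simp [t]
  refine ⟨(unitsEquiv 𝕜 E (Units.oneSub t ht)).trans e, ?_⟩
  ext v
  change e ((Units.oneSub t ht : E →L[𝕜] E) v) = f v
  rw [hw, ContinuousLinearMap.comp_apply, ContinuousLinearEquiv.coe_coe, apply_symm_apply]

end ContinuousLinearEquiv

theorem constructive_implicit_function_theorem_invertibility_general
    {P X Y : Type*}
    [NormedAddCommGroup P] [NormedSpace ℝ P]
    [NormedAddCommGroup X] [NormedSpace ℝ X] [CompleteSpace X]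
    [NormedAddCommGroup Y] [NormedSpace ℝ Y]
    (DG : P × X → (P × X) →L[ℝ] Y)
    (αs : P) (xs : X)
    (K L₁ L₂ ℓx ℓα : ℝ)
    (hL₁ : 0 < L₁) (hL₂ : 0 < L₂)
    -- (H2) invertibility of the partial Fréchet derivative with inverse bound K
    (E : X ≃L[ℝ] Y)
    (hE : (E : X →L[ℝ] Y) = (DG (αs, xs)).comp (ContinuousLinearMap.inr ℝ P X))
    (H2 : ‖(E.symm : Y →L[ℝ] X)‖ ≤ K)
    -- (H3) local Lipschitz continuity of the partial derivative in x
    (H3 : ∀ (α : P) (x : X), ‖x - xs‖ ≤ ℓx → ‖α - αs‖ ≤ ℓα →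
      ‖(DG (α, x)).comp (ContinuousLinearMap.inr ℝ P X) -
        (DG (αs, xs)).comp (ContinuousLinearMap.inr ℝ P X)‖ ≤
        L₁ * ‖x - xs‖ + L₂ * ‖α - αs‖)
    -- the validation box parameters
    (δα δx : ℝ) (hδα : δα ≤ ℓα) (hδx : δx ≤ ℓx)
    (hcond1 : 2 * K * L₁ * δx + 2 * K * L₂ * δα ≤ 1) :
    ∀ (α : P) (x : X), ‖α - αs‖ ≤ δα → ‖x - xs‖ ≤ δx →
      ∃ E' : X ≃L[ℝ] Y,
        (E' : X →L[ℝ] Y) = (DG (α, x)).comp (ContinuousLinearMap.inr ℝ P X) := by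
  intro α x hα hx
  refine E.exists_eq_of_norm_symm_mul_norm_sub_lt_one _ ?_
  have hdist : ‖(DG (α, x)).comp (ContinuousLinearMap.inr ℝ P X) - E‖ ≤ L₁ * δx + L₂ * δα :=
    calc _ ≤ L₁ * ‖x - xs‖ + L₂ * ‖α - αs‖ := hE ▸ H3 α x (hx.trans hδx) (hα.trans hδα)
      _ ≤ L₁ * δx + L₂ * δα := by gcongr
  calc _ ≤ K * (L₁ * δx + L₂ * δα) :=
        mul_le_mul H2 hdist (norm_nonneg _) ((norm_nonneg _).trans H2)
    _ < 1 := by linarith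

/-- Constructive Implicit Function Theorem: invertibility of the linearization
on the validation box. -/
theorem constructive_implicit_function_theorem_invertibility
    {P X Y : Type*}
    [NormedAddCommGroup P] [NormedSpace ℝ P] [CompleteSpace P]
    [NormedAddCommGroup X] [NormedSpace ℝ X] [CompleteSpace X]
    [NormedAddCommGroup Y] [NormedSpace ℝ Y] [CompleteSpace Y]
    (G : P × X → Y) (DG : P × X → (P × X) →L[ℝ] Y)
    (hG : ∀ p : P × X, HasFDerivAt G (DG p) p)
    (αs : P) (xs : X)
    (ρ K L₁ L₂ L₃ L₄ ℓx ℓα : ℝ)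
    (hρ : 0 < ρ) (hK : 0 < K) (hL₁ : 0 < L₁) (hL₂ : 0 < L₂)
    (hL₃ : 0 < L₃) (hL₄ : 0 < L₄) (hℓx : 0 < ℓx) (hℓα : 0 ≤ ℓα)
    -- (H1) small residual
    (H1 : ‖G (αs, xs)‖ ≤ ρ)
    -- (H2) invertibility of the partial Fréchet derivative with inverse bound K
    (E : X ≃L[ℝ] Y)
    (hE : (E : X →L[ℝ] Y) = (DG (αs, xs)).comp (ContinuousLinearMap.inr ℝ P X))
    (H2 : ‖(E.symm : Y →L[ℝ] X)‖ ≤ K)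
    -- (H3) local Lipschitz continuity of the partial derivative in x
    (H3 : ∀ (α : P) (x : X), ‖x - xs‖ ≤ ℓx → ‖α - αs‖ ≤ ℓα →
      ‖(DG (α, x)).comp (ContinuousLinearMap.inr ℝ P X) -
        (DG (αs, xs)).comp (ContinuousLinearMap.inr ℝ P X)‖ ≤
        L₁ * ‖x - xs‖ + L₂ * ‖α - αs‖)
    -- (H4) bound on the partial derivative in the parameter
    (H4 : ∀ α : P, ‖α - αs‖ ≤ ℓα →
      ‖(DG (α, xs)).comp (ContinuousLinearMap.inl ℝ P X)‖ ≤ L₃ + L₄ * ‖α - αs‖)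
    -- the validation box parameters
    (δα δx : ℝ) (hδα0 : 0 ≤ δα) (hδα : δα ≤ ℓα) (hδx0 : 0 < δx) (hδx : δx ≤ ℓx)
    (hcond1 : 2 * K * L₁ * δx + 2 * K * L₂ * δα ≤ 1)
    (hcond2 : 2 * K * ρ + 2 * K * L₃ * δα + 2 * K * L₄ * δα ^ 2 ≤ δx) :
    ∀ (α : P) (x : X), ‖α - αs‖ ≤ δα → ‖x - xs‖ ≤ δx →
      ∃ E' : X ≃L[ℝ] Y,
        (E' : X →L[ℝ] Y) = (DG (α, x)).comp (ContinuousLinearMap.inr ℝ P X) :=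
  constructive_implicit_function_theorem_invertibility_general DG αs xs K L₁ L₂ ℓx ℓα hL₁ hL₂ E hE
    H2 H3 δα δx hδα hδx hcond1
end

section
/- Constructive Implicit Function Theorem (smoothness of the solution branch): Assume (H1)–(H4), and let (δ_α, δ_x) be any pair with 0 ≤ δ_α ≤ ℓ_α and 0 < δ_x ≤ ℓ_x satisfying 2KL₁δ_x + 2KL₂δ_α ≤ 1 and 2Kρ + 2KL₃δ_α + 2KL₄δ_α² ≤ δ_x, and let x(α) denote, for each α with ‖α − α*‖_P ≤ δ_α, the unique element of X with ‖x(α) − x*‖_X ≤ δ_x and G(α, x(α)) = 0. If the mapping G : P × X → Y is k-times continuously Fréchet differentiable, then the solution function α ↦ x(α) is k-times continuously Fréchet differentiable on the ball {α : ‖α − α*‖_P ≤ δ_α}. -/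
/-!
On the box, `D_xG(α, x)` differs from `D_xG(α*, x*)` by at most `L₁δ_x + L₂δ_α ≤ 1/(2K)`.
Hence it is invertible there (Neumann series), and the mean value theorem gives
`‖x(β) - x(α)‖ ≤ 2K ‖G(β, x(α))‖`, so the solution branch is continuous. A continuous branch of
zeros of a `C^k` map with invertible partial derivative agrees, near each of its points, with the
`C^k` implicit function of the implicit function theorem.
-/

open Filter Topology
open scoped ContDiff

section Perturbation

variable {𝕜 X Y : Type*} [NontriviallyNormedField 𝕜]
  [NormedAddCommGroup X] [NormedSpace 𝕜 X] [CompleteSpace X]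
  [NormedAddCommGroup Y] [NormedSpace 𝕜 Y]

theorem ContinuousLinearEquiv.isInvertible_of_norm_symm_mul_norm_sub_lt (E : X ≃L[𝕜] Y)
    {A : X →L[𝕜] Y} (h : ‖(E.symm : Y →L[𝕜] X)‖ * ‖A - E‖ < 1) : A.IsInvertible := by
  set t : X →L[𝕜] X := (E.symm : Y →L[𝕜] X) ∘L (E - A)
  have ht : ‖t‖ < 1 := (ContinuousLinearMap.opNorm_comp_le _ _).trans_lt (by rwa [norm_sub_rev])
  have hA : A = (E : X →L[𝕜] Y) ∘L (1 - t) := by ext x; simp [t]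
  rw [hA]
  exact ContinuousLinearMap.isInvertible_equiv.comp
    ⟨ContinuousLinearEquiv.ofUnit (Units.oneSub t ht), rfl⟩

end Perturbation

section MeanValue

variable {X Y : Type*} [NormedAddCommGroup X] [NormedSpace ℝ X]
  [NormedAddCommGroup Y] [NormedSpace ℝ Y]

theorem Convex.mul_norm_sub_le_of_norm_hasFDerivWithin_sub_le {s : Set X} (hs : Convex ℝ s)
    {f : X → Y} {f' : X → X →L[ℝ] Y} (hf : ∀ x ∈ s, HasFDerivWithinAt f (f' x) s x)
    {E : X ≃L[ℝ] Y} {K C : ℝ} (hK : ‖(E.symm : Y →L[ℝ] X)‖ ≤ K)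
    (hC : ∀ x ∈ s, ‖f' x - E‖ ≤ C) {x y : X} (hx : x ∈ s) (hy : y ∈ s) :
    (1 - K * C) * ‖y - x‖ ≤ K * ‖f y - f x‖ := by
  have hK0 : 0 ≤ K := (norm_nonneg _).trans hK
  have hmv : ‖f y - f x - E (y - x)‖ ≤ C * ‖y - x‖ :=
    hs.norm_image_sub_le_of_norm_hasFDerivWithin_le' hf hC hx hy
  have hE : ‖E (y - x)‖ ≤ ‖f y - f x‖ + C * ‖y - x‖ := by
    calc ‖E (y - x)‖ = ‖(f y - f x) - (f y - f x - E (y - x))‖ := by rw [sub_sub_cancel]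
      _ ≤ ‖f y - f x‖ + C * ‖y - x‖ := (norm_sub_le _ _).trans (by gcongr)
  have hinv : ‖y - x‖ ≤ K * ‖E (y - x)‖ := by
    calc ‖y - x‖ = ‖(E.symm : Y →L[ℝ] X) (E (y - x))‖ := by simp
      _ ≤ K * ‖E (y - x)‖ := (ContinuousLinearMap.le_opNorm _ _).trans (by gcongr)
  nlinarith [mul_le_mul_of_nonneg_left hE hK0]

end MeanValue

section ContinuityOfBranch

variable {P X Y : Type*} [TopologicalSpace P]
  [NormedAddCommGroup X] [NormedAddCommGroup Y]

theorem continuousOn_of_norm_sub_le_mul_norm_apply {G : P × X → Y} (hG : Continuous G)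
    {χ : P → X} {s : Set P} {M : ℝ} (hzero : ∀ α ∈ s, G (α, χ α) = 0)
    (hbound : ∀ α ∈ s, ∀ β ∈ s, ‖χ β - χ α‖ ≤ M * ‖G (β, χ α)‖) : ContinuousOn χ s := by
  intro α hα
  have hres : Tendsto (fun β => M * ‖G (β, χ α)‖) (𝓝[s] α) (𝓝 0) := by
    have : Continuous fun β => M * ‖G (β, χ α)‖ := by fun_prop
    simpa [hzero α hα] using (this.tendsto α).mono_left nhdsWithin_le_nhds
  refine tendsto_iff_norm_sub_tendsto_zero.mpr <|
    squeeze_zero' (.of_forall fun _ => norm_nonneg _) ?_ hres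
  filter_upwards [self_mem_nhdsWithin] with β hβ using hbound α hα β hβ

end ContinuityOfBranch

section ImplicitBranch

variable {𝕜 P X Y : Type*} [RCLike 𝕜]
  [NormedAddCommGroup P] [NormedSpace 𝕜 P] [CompleteSpace P]
  [NormedAddCommGroup X] [NormedSpace 𝕜 X] [CompleteSpace X]
  [NormedAddCommGroup Y] [NormedSpace 𝕜 Y] [CompleteSpace Y]
  {G : P × X → Y} {χ : P → X} {s : Set P} {n : ℕ∞ω}

theorem ContinuousWithinAt.contDiffWithinAt_of_apply_eq_zero {a : P}
    (hχ : ContinuousWithinAt χ s a) (hG : ContDiffAt 𝕜 n G (a, χ a)) (hn : n ≠ 0)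
    (hinv : (fderiv 𝕜 G (a, χ a) ∘L .inr 𝕜 P X).IsInvertible)
    (hzero : ∀ α ∈ s, G (α, χ α) = 0) (ha : a ∈ s) : ContDiffWithinAt 𝕜 n χ s a := by
  have hgraph : Tendsto (fun α => (α, χ α)) (𝓝[s] a) (𝓝 (a, χ a)) :=
    (continuousWithinAt_id.prodMk hχ).tendsto
  have hψ : χ =ᶠ[𝓝[s] a] hG.implicitFunction hn hinv := by
    filter_upwards [hgraph.eventually (hG.eventually_apply_eq_iff_implicitFunction hn hinv),
      self_mem_nhdsWithin] with α hα hαs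
    exact (hα.mp (by rw [hzero α hαs, hzero a ha])).symm
  exact (hG.contDiffAt_implicitFunction hn hinv).contDiffWithinAt.congr_of_eventuallyEq hψ
    (hG.implicitFunction_apply_self hn hinv).symm

theorem ContinuousOn.contDiffOn_of_apply_eq_zero (hχ : ContinuousOn χ s)
    (hG : ∀ a ∈ s, ContDiffAt 𝕜 n G (a, χ a))
    (hinv : ∀ a ∈ s, (fderiv 𝕜 G (a, χ a) ∘L .inr 𝕜 P X).IsInvertible)
    (hzero : ∀ α ∈ s, G (α, χ α) = 0) : ContDiffOn 𝕜 n χ s := by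
  rcases eq_or_ne n 0 with rfl | hn
  · exact contDiffOn_zero.mpr hχ
  · exact fun a ha => (hχ a ha).contDiffWithinAt_of_apply_eq_zero (hG a ha) hn (hinv a ha) hzero ha

end ImplicitBranch

theorem constructive_implicit_function_theorem_smoothness_general
    {P X Y : Type*}
    [NormedAddCommGroup P] [NormedSpace ℝ P] [CompleteSpace P]
    [NormedAddCommGroup X] [NormedSpace ℝ X] [CompleteSpace X]
    [NormedAddCommGroup Y] [NormedSpace ℝ Y] [CompleteSpace Y]
    (G : P × X → Y) (DG : P × X → (P × X) →L[ℝ] Y)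
    (hG : ∀ p : P × X, HasFDerivAt G (DG p) p)
    (αs : P) (xs : X)
    (K L₁ L₂ ℓx ℓα : ℝ)
    (hL₁ : 0 < L₁) (hL₂ : 0 < L₂)
    -- (H2) invertibility of the partial Fréchet derivative with inverse bound K
    (E : X ≃L[ℝ] Y)
    (hE : (E : X →L[ℝ] Y) = (DG (αs, xs)).comp (ContinuousLinearMap.inr ℝ P X))
    (H2 : ‖(E.symm : Y →L[ℝ] X)‖ ≤ K)
    -- (H3) local Lipschitz continuity of the partial derivative in x
    (H3 : ∀ (α : P) (x : X), ‖x - xs‖ ≤ ℓx → ‖α - αs‖ ≤ ℓα →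
      ‖(DG (α, x)).comp (ContinuousLinearMap.inr ℝ P X) -
        (DG (αs, xs)).comp (ContinuousLinearMap.inr ℝ P X)‖ ≤
        L₁ * ‖x - xs‖ + L₂ * ‖α - αs‖)
    -- the validation box parameters
    (δα δx : ℝ) (hδα : δα ≤ ℓα) (hδx : δx ≤ ℓx)
    (hcond1 : 2 * K * L₁ * δx + 2 * K * L₂ * δα ≤ 1)
    -- the solution function χ = (α ↦ x(α)), uniquely determined on the box
    (χ : P → X)
    (hχ : ∀ α : P, ‖α - αs‖ ≤ δα → ‖χ α - xs‖ ≤ δx ∧ G (α, χ α) = 0)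
    -- k-times continuous Fréchet differentiability of G
    (k : ℕ) (hGk : ContDiff ℝ k G) :
    ContDiffOn ℝ k χ {α : P | ‖α - αs‖ ≤ δα} := by
  set S : Set P := {α : P | ‖α - αs‖ ≤ δα}
  have hK : 0 ≤ K := (norm_nonneg _).trans H2
  have hKC : K * (L₁ * δx + L₂ * δα) ≤ 1 / 2 := by linarith
  have hdev : ∀ α ∈ S, ∀ x ∈ Metric.closedBall xs δx,
      ‖DG (α, x) ∘L ContinuousLinearMap.inr ℝ P X - E‖ ≤ L₁ * δx + L₂ * δα := by
    intro α hα x hx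
    rw [mem_closedBall_iff_norm] at hx
    rw [hE]
    calc _ ≤ L₁ * ‖x - xs‖ + L₂ * ‖α - αs‖ := H3 α x (hx.trans hδx) (hα.trans hδα)
      _ ≤ L₁ * δx + L₂ * δα := by gcongr; exact hα
  have hbranch : ∀ α ∈ S, χ α ∈ Metric.closedBall xs δx :=
    fun α hα => mem_closedBall_iff_norm.mpr (hχ α hα).1
  have hcont : ContinuousOn χ S := by
    refine continuousOn_of_norm_sub_le_mul_norm_apply (M := 2 * K) hGk.continuous
      (fun α hα => (hχ α hα).2) fun α hα β hβ => ?_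
    have hmv := (convex_closedBall xs δx).mul_norm_sub_le_of_norm_hasFDerivWithin_sub_le
      (f := fun x => G (β, x))
      (fun x _ => ((hG (β, x)).comp x (hasFDerivAt_prodMk_right β x)).hasFDerivWithinAt)
      H2 (hdev β hβ) (hbranch α hα) (hbranch β hβ)
    rw [(hχ β hβ).2, zero_sub, norm_neg] at hmv
    nlinarith [norm_nonneg (χ β - χ α)]
  refine hcont.contDiffOn_of_apply_eq_zero (fun _ _ => hGk.contDiffAt) (fun α hα => ?_)
    (fun α hα => (hχ α hα).2)
  rw [(hG _).fderiv]
  refine E.isInvertible_of_norm_symm_mul_norm_sub_lt <| calc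
    _ ≤ K * (L₁ * δx + L₂ * δα) := mul_le_mul H2 (hdev α hα _ (hbranch α hα)) (norm_nonneg _) hK
    _ < 1 := by linarith

/-- Constructive Implicit Function Theorem: smoothness of the solution branch. -/
theorem constructive_implicit_function_theorem_smoothness
    {P X Y : Type*}
    [NormedAddCommGroup P] [NormedSpace ℝ P] [CompleteSpace P]
    [NormedAddCommGroup X] [NormedSpace ℝ X] [CompleteSpace X]
    [NormedAddCommGroup Y] [NormedSpace ℝ Y] [CompleteSpace Y]
    (G : P × X → Y) (DG : P × X → (P × X) →L[ℝ] Y)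
    (hG : ∀ p : P × X, HasFDerivAt G (DG p) p)
    (αs : P) (xs : X)
    (ρ K L₁ L₂ L₃ L₄ ℓx ℓα : ℝ)
    (hρ : 0 < ρ) (hK : 0 < K) (hL₁ : 0 < L₁) (hL₂ : 0 < L₂)
    (hL₃ : 0 < L₃) (hL₄ : 0 < L₄) (hℓx : 0 < ℓx) (hℓα : 0 ≤ ℓα)
    -- (H1) small residual
    (H1 : ‖G (αs, xs)‖ ≤ ρ)
    -- (H2) invertibility of the partial Fréchet derivative with inverse bound K
    (E : X ≃L[ℝ] Y)
    (hE : (E : X →L[ℝ] Y) = (DG (αs, xs)).comp (ContinuousLinearMap.inr ℝ P X))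
    (H2 : ‖(E.symm : Y →L[ℝ] X)‖ ≤ K)
    -- (H3) local Lipschitz continuity of the partial derivative in x
    (H3 : ∀ (α : P) (x : X), ‖x - xs‖ ≤ ℓx → ‖α - αs‖ ≤ ℓα →
      ‖(DG (α, x)).comp (ContinuousLinearMap.inr ℝ P X) -
        (DG (αs, xs)).comp (ContinuousLinearMap.inr ℝ P X)‖ ≤
        L₁ * ‖x - xs‖ + L₂ * ‖α - αs‖)
    -- (H4) bound on the partial derivative in the parameter
    (H4 : ∀ α : P, ‖α - αs‖ ≤ ℓα →
      ‖(DG (α, xs)).comp (ContinuousLinearMap.inl ℝ P X)‖ ≤ L₃ + L₄ * ‖α - αs‖)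
    -- the validation box parameters
    (δα δx : ℝ) (hδα0 : 0 ≤ δα) (hδα : δα ≤ ℓα) (hδx0 : 0 < δx) (hδx : δx ≤ ℓx)
    (hcond1 : 2 * K * L₁ * δx + 2 * K * L₂ * δα ≤ 1)
    (hcond2 : 2 * K * ρ + 2 * K * L₃ * δα + 2 * K * L₄ * δα ^ 2 ≤ δx)
    -- the solution function χ = (α ↦ x(α)), uniquely determined on the box
    (χ : P → X)
    (hχ : ∀ α : P, ‖α - αs‖ ≤ δα → ‖χ α - xs‖ ≤ δx ∧ G (α, χ α) = 0)
    (hχuniq : ∀ α : P, ‖α - αs‖ ≤ δα →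
      ∀ x : X, ‖x - xs‖ ≤ δx → G (α, x) = 0 → x = χ α)
    -- k-times continuous Fréchet differentiability of G
    (k : ℕ) (hGk : ContDiff ℝ k G) :
    ContDiffOn ℝ k χ {α : P | ‖α - αs‖ ≤ δα} :=
  constructive_implicit_function_theorem_smoothness_general G DG hG αs xs K L₁ L₂ ℓx ℓα hL₁ hL₂ E hE
    H2 H3 δα δx hδα hδx hcond1 χ hχ k hGk
end

section
/- Sobolev embedding for the zero mass case (Cauchy–Schwarz form): For d ∈ {1,2,3}, let (α_k)_{k ∈ ℕ₀^d, |k|>0} be a real coefficient family with Σ_{|k|>0} κ_k² α_k² < ∞. Then Σ_{|k|>0} c_k² κ_k⁻² < ∞, for every x ∈ Ω the series u(x) = Σ_{|k|>0} α_k φ_k(x) converges absolutely, and sup_{x ∈ Ω} |u(x)| ≤ (Σ_{|k|>0} κ_k² α_k²)^{1/2} · (Σ_{|k|>0} c_k² κ_k⁻²)^{1/2}; that is, ‖u‖_∞ ≤ ‖u‖_{H̄²} · (Σ_{|k|>0} c_k² κ_k⁻²)^{1/2}. -/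
/-!
Write `α_k φ_k(x) = (κ_k α_k) · (φ_k(x) / κ_k)` and use `|φ_k| ≤ c_k`: Cauchy–Schwarz gives
`Σ |α_k φ_k(x)| ≤ (Σ κ_k² α_k²)^{1/2} (Σ c_k² κ_k⁻²)^{1/2}`, so everything reduces to the
convergence of `Σ c_k² κ_k⁻²`. As `c_k² ≤ 2^d`, this is the convergence of `Σ_{k ≠ 0} |k|⁻⁴` over
(part of) the lattice `ℤ^d`, which holds because `d < 4`.
-/

open MeasureTheory Real

noncomputable section

/-- The open unit cube `Ω = (0,1)^d` in `ℝ^d`. -/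
def cubeO (d : ℕ) : Set (Fin d → ℝ) := Set.univ.pi fun _ => Set.Ioo (0 : ℝ) 1

/-- The normalization constant `c_k = c_{k_1} ⋯ c_{k_d}` with `c_0 = 1`, `c_ℓ = √2` for `ℓ ≥ 1`. -/
def ck (d : ℕ) (k : Fin d → ℕ) : ℝ := ∏ i, (if k i = 0 then 1 else Real.sqrt 2)

/-- The cosine basis function `φ_k(x) = c_k ∏ cos(k_i π x_i)`. -/
def phi (d : ℕ) (k : Fin d → ℕ) (x : Fin d → ℝ) : ℝ :=
  ck d k * ∏ i, Real.cos ((k i : ℝ) * Real.pi * x i)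

/-- The Laplacian eigenvalue `κ_k = π² (k_1² + ⋯ + k_d²)`. -/
def kap (d : ℕ) (k : Fin d → ℕ) : ℝ := Real.pi ^ 2 * ∑ i, (k i : ℝ) ^ 2

/-- The index set of nonzero multi-indices (`|k| > 0`). -/
abbrev Idx (d : ℕ) := {k : Fin d → ℕ // k ≠ 0}

theorem summable_abs_mul_and_tsum_abs_mul_le {ι : Type*} {f g : ι → ℝ}
    (hf : Summable fun i => f i ^ 2) (hg : Summable fun i => g i ^ 2) :
    (Summable fun i => |f i * g i|) ∧
      ∑' i, |f i * g i| ≤ √(∑' i, f i ^ 2) * √(∑' i, g i ^ 2) := by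
  have hsq : ∀ h : ι → ℝ, (fun i => |h i| ^ (2 : ℝ)) = fun i => h i ^ 2 := fun h => by
    ext i; rw [rpow_two, sq_abs]
  have H := summable_and_inner_le_Lp_mul_Lq_tsum_of_nonneg Real.HolderConjugate.two_two
    (fun i => abs_nonneg (f i)) (fun i => abs_nonneg (g i))
    (by rwa [hsq f]) (by rwa [hsq g])
  simpa only [hsq, ← abs_mul, ← sqrt_eq_rpow] using H

theorem summable_sum_sq_rpow_neg {d : ℕ} {p : ℝ} (hp : d < p) :
    Summable fun k : Fin d → ℤ => (∑ i, (k i : ℝ) ^ 2) ^ (-p / 2) := by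
  let b := (EuclideanSpace.basisFun (Fin d) ℝ).toBasis
  have hL := ZLattice.summable_norm_rpow (Submodule.span ℤ (Set.range b)) (-p) (by
    rw [ZLattice.rank ℝ, finrank_euclideanSpace_fin]; linarith)
  let e := (b.restrictScalars ℤ).equivFun.symm
  refine (hL.comp_injective e.injective).congr fun k => ?_
  have he : ∀ i, (e k : EuclideanSpace ℝ (Fin d)) i = k i := by
    intro i
    simp only [e, Module.Basis.equivFun_symm_apply, Submodule.coe_sum, Submodule.coe_smul,
      Module.Basis.restrictScalars_apply]
    simp [b, Pi.single_apply]
  rw [Function.comp_apply, Submodule.coe_norm, EuclideanSpace.norm_eq, sqrt_eq_rpow,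
    ← rpow_mul (by positivity)]
  simp only [he, norm_eq_abs, sq_abs]
  ring_nf

theorem summable_inv_kap_sq {d : ℕ} (hd : d < 4) :
    Summable fun k : Idx d => (kap d k.1 ^ 2)⁻¹ := by
  have hinj : Function.Injective fun k : Idx d => fun i => (k.1 i : ℤ) :=
    fun k l h => Subtype.ext <| funext fun i => by simpa using congrFun h i
  refine (((summable_sum_sq_rpow_neg (p := 4) (by exact_mod_cast hd)).comp_injective
    hinj).mul_left (π ^ 4)⁻¹).congr fun k => ?_
  simp only [Function.comp_apply, Int.cast_natCast, kap]
  rw [show (-4 / 2 : ℝ) = -(2 : ℕ) by norm_num, rpow_neg (by positivity), rpow_natCast]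
  ring

theorem ck_nonneg (d : ℕ) (k : Fin d → ℕ) : 0 ≤ ck d k :=
  Finset.prod_nonneg fun i _ => by split <;> positivity

theorem ck_sq_le (d : ℕ) (k : Fin d → ℕ) : ck d k ^ 2 ≤ 2 ^ d := by
  rw [ck, ← Finset.prod_pow]
  calc ∏ i, (if k i = 0 then 1 else √2) ^ 2 ≤ ∏ _i : Fin d, (2 : ℝ) :=
        Finset.prod_le_prod (fun i _ => by positivity) fun i _ => by split <;> norm_num
    _ = 2 ^ d := by simp

theorem abs_phi_le (d : ℕ) (k : Fin d → ℕ) (x : Fin d → ℝ) : |phi d k x| ≤ ck d k := by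
  rw [phi, abs_mul, abs_of_nonneg (ck_nonneg d k), Finset.abs_prod]
  exact mul_le_of_le_one_right (ck_nonneg d k)
    (Finset.prod_le_one (fun i _ => abs_nonneg _) fun i _ => abs_cos_le_one _)

theorem kap_pos {d : ℕ} {k : Fin d → ℕ} (hk : k ≠ 0) : 0 < kap d k := by
  obtain ⟨i, hi⟩ := Function.ne_iff.mp hk
  have : 0 < ∑ j, (k j : ℝ) ^ 2 := Finset.sum_pos' (fun j _ => by positivity)
    ⟨i, Finset.mem_univ i, pow_pos (Nat.cast_pos.2 (Nat.pos_of_ne_zero hi)) 2⟩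
  unfold kap; positivity

theorem summable_ck_sq_div_kap_sq {d : ℕ} (hd : d < 4) :
    Summable fun k : Idx d => ck d k.1 ^ 2 / kap d k.1 ^ 2 :=
  ((summable_inv_kap_sq hd).mul_left (2 ^ d)).of_nonneg_of_le (fun k => by positivity)
    fun k => by
      rw [div_eq_mul_inv]
      exact mul_le_mul_of_nonneg_right (ck_sq_le d k.1) (by positivity)

theorem summable_abs_mul_phi_and_tsum_le {d : ℕ} (hd : d < 4) {a : Idx d → ℝ}
    (ha : Summable fun k : Idx d => kap d k.1 ^ 2 * a k ^ 2) (x : Fin d → ℝ) :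
    (Summable fun k : Idx d => |a k * phi d k.1 x|) ∧
      ∑' k : Idx d, |a k * phi d k.1 x| ≤
        √(∑' k : Idx d, kap d k.1 ^ 2 * a k ^ 2) *
          √(∑' k : Idx d, ck d k.1 ^ 2 / kap d k.1 ^ 2) := by
  have hw := summable_ck_sq_div_kap_sq hd
  have hsplit : ∀ k : Idx d,
      a k * phi d k.1 x = (kap d k.1 * a k) * (phi d k.1 x / kap d k.1) := fun k => by
    field_simp [(kap_pos k.2).ne']
  have hg_le : ∀ k : Idx d, (phi d k.1 x / kap d k.1) ^ 2 ≤ ck d k.1 ^ 2 / kap d k.1 ^ 2 :=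
    fun k => by
      rw [div_pow]
      refine div_le_div_of_nonneg_right (sq_le_sq.2 ?_) (sq_nonneg _)
      rw [abs_of_nonneg (ck_nonneg d k.1)]
      exact abs_phi_le d k.1 x
  have hg := hw.of_nonneg_of_le (fun k => sq_nonneg _) hg_le
  obtain ⟨hsum, hle⟩ := summable_abs_mul_and_tsum_abs_mul_le
    (f := fun k => kap d k.1 * a k) (by simpa only [mul_pow] using ha) hg
  simp only [← hsplit, mul_pow] at hsum hle
  exact ⟨hsum, hle.trans <|
    mul_le_mul_of_nonneg_left (sqrt_le_sqrt (hg.tsum_le_tsum hg_le hw)) (sqrt_nonneg _)⟩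

/-- Sobolev embedding for the zero mass case, Cauchy–Schwarz form:
if `Σ_{|k|>0} κ_k² α_k² < ∞` then `Σ_{|k|>0} c_k² κ_k⁻² < ∞`, the series
`u(x) = Σ α_k φ_k(x)` converges absolutely at every point of `Ω`, and
`|u(x)| ≤ (Σ κ_k² α_k²)^{1/2} (Σ c_k² κ_k⁻²)^{1/2}`. -/
theorem sobolev_embedding_zero_mass (d : ℕ) (hd : d = 1 ∨ d = 2 ∨ d = 3)
    (a : Idx d → ℝ) (ha : Summable fun k : Idx d => kap d k.1 ^ 2 * a k ^ 2) :
    (Summable fun k : Idx d => ck d k.1 ^ 2 / kap d k.1 ^ 2) ∧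
    (∀ x ∈ cubeO d, Summable fun k : Idx d => |a k * phi d k.1 x|) ∧
    (∀ x ∈ cubeO d,
      |∑' k : Idx d, a k * phi d k.1 x| ≤
        Real.sqrt (∑' k : Idx d, kap d k.1 ^ 2 * a k ^ 2) *
          Real.sqrt (∑' k : Idx d, ck d k.1 ^ 2 / kap d k.1 ^ 2)) := by
  have hd4 : d < 4 := by omega
  refine ⟨summable_ck_sq_div_kap_sq hd4,
    fun x _ => (summable_abs_mul_phi_and_tsum_le hd4 ha x).1, fun x _ => ?_⟩
  obtain ⟨hsum, hle⟩ := summable_abs_mul_phi_and_tsum_le hd4 ha x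
  calc |∑' k : Idx d, a k * phi d k.1 x| ≤ ∑' k : Idx d, |a k * phi d k.1 x| := by
        simpa only [Real.norm_eq_abs] using
          norm_tsum_le_tsum_norm (f := fun k : Idx d => a k * phi d k.1 x)
            (by simpa only [Real.norm_eq_abs] using hsum)
    _ ≤ _ := hle

end
end
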